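/- arXiv:2212.10644 — 7 statements merged into one kernel-verified Lean document; each statement's English description precedes it below -/
import Mathlib

section
/- Let N, m, p, σ₁, σ₂ be real numbers with m > 0, let δ ∈ ℝ, θ > 0, C > 0 satisfy the compatibility condition (m-1)δ + 2θ - σ₁ - 2 = 0, and let T > 0. Suppose w : (0,∞) × (0,T) → (0,∞) is differentiable in its second (time) variable, z ↦ w(z,τ)^m is twice differentiable, and w satisfies C ∂_τ w(z,τ) = θ² ∂_zz(w^m)(z,τ) + (θ(2mδ+θ+N-2)/z) ∂_z(w^m)(z,τ) + (mδ(mδ+N-2)/z²) w(z,τ)^m + z^{(σ₂-σ₁+δ(p-1))/θ} w(z,τ)^p for all z > 0, τ ∈ (0,T). Then the function u(r,t) := r^δ w(r^θ, C t) is a classical radial solution of (E)[N,m,p,σ₁,σ₂] on (0,∞) × (0, T/C). -/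
/-! With `z = r^θ` and `τ = C t`, the chain rule turns the radial operator
`∂_rr + ((N-1)/r) ∂_r` applied to `(r^δ w)^m = r^{mδ} w^m` into `r^{mδ+2θ-2}` times the spatial
operator of the equation for `w`, while `r^{σ₁} ∂_t u = r^{σ₁+δ} C ∂_τ w`. The compatibility
condition says exactly that `σ₁ + δ = mδ + 2θ - 2`, so the two sides match, and the source term
`r^{mδ+2θ-2} z^{(σ₂-σ₁+δ(p-1))/θ} w^p` becomes `r^{σ₂} u^p`. -/

open Real Set Filter Topology

noncomputable section

/-- `u` is a classical radial solution of (E)[N,m,p,σ₁,σ₂] on (0,∞) × I: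
`u` is positive, differentiable in time, `r ↦ u(r,t)^m` is twice differentiable in `r`,
and `r^{σ₁} ∂_t u = ∂_rr(u^m) + ((N-1)/r) ∂_r(u^m) + r^{σ₂} u^p` holds pointwise. -/
def IsClassicalRadialSolution (N m p σ₁ σ₂ : ℝ) (I : Set ℝ) (u : ℝ → ℝ → ℝ) : Prop :=
  ∀ r : ℝ, 0 < r → ∀ t ∈ I,
    0 < u r t ∧
    DifferentiableAt ℝ (fun τ => u r τ) t ∧
    DifferentiableAt ℝ (fun ρ => u ρ t ^ m) r ∧
    DifferentiableAt ℝ (deriv (fun ρ => u ρ t ^ m)) r ∧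
    r ^ σ₁ * deriv (fun τ => u r τ) t =
      deriv (deriv (fun ρ => u ρ t ^ m)) r
        + ((N - 1) / r) * deriv (fun ρ => u ρ t ^ m) r
        + r ^ σ₂ * u r t ^ p

lemma rpow_mul_rpow_of_add_eq {r : ℝ} (hr : 0 < r) {a b c : ℝ} (h : a + b = c) :
    r ^ a * r ^ b = r ^ c := by
  rw [← rpow_add hr, h]

section RadialChangeOfVariables

variable {F : ℝ → ℝ} {a θ r : ℝ}

lemma hasDerivAt_rpow_mul_comp_rpow {F' : ℝ} (hr : 0 < r) (hF : HasDerivAt F F' (r ^ θ)) :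
    HasDerivAt (fun ρ => ρ ^ a * F (ρ ^ θ))
      (a * (r ^ (a - 1) * F (r ^ θ)) + θ * (r ^ (a + θ - 1) * F')) r := by
  have hθ : HasDerivAt (fun ρ : ℝ => ρ ^ θ) (θ * r ^ (θ - 1)) r :=
    hasDerivAt_rpow_const (Or.inl hr.ne')
  refine ((hasDerivAt_rpow_const (p := a) (Or.inl hr.ne')).mul (hF.comp r hθ)).congr_deriv ?_
  have e : r ^ a * r ^ (θ - 1) = r ^ (a + θ - 1) := rpow_mul_rpow_of_add_eq hr (by ring)
  rw [Function.comp_apply]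
  linear_combination θ * F' * e

lemma deriv_rpow_mul_comp_rpow_eventuallyEq (hF : ∀ z, 0 < z → DifferentiableAt ℝ F z)
    (hr : 0 < r) :
    deriv (fun ρ => ρ ^ a * F (ρ ^ θ)) =ᶠ[𝓝 r] fun ρ =>
      a * (ρ ^ (a - 1) * F (ρ ^ θ)) + θ * (ρ ^ (a + θ - 1) * deriv F (ρ ^ θ)) := by
  filter_upwards [Ioi_mem_nhds hr] with ρ hρ
  exact (hasDerivAt_rpow_mul_comp_rpow hρ (hF _ (rpow_pos_of_pos hρ θ)).hasDerivAt).deriv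

lemma hasDerivAt_deriv_rpow_mul_comp_rpow {F'' : ℝ} (hF : ∀ z, 0 < z → DifferentiableAt ℝ F z)
    (hr : 0 < r) (hF' : HasDerivAt (deriv F) F'' (r ^ θ)) :
    HasDerivAt (deriv fun ρ => ρ ^ a * F (ρ ^ θ))
      (a * ((a - 1) * (r ^ (a - 1 - 1) * F (r ^ θ))
          + θ * (r ^ (a - 1 + θ - 1) * deriv F (r ^ θ)))
        + θ * ((a + θ - 1) * (r ^ (a + θ - 1 - 1) * deriv F (r ^ θ))
          + θ * (r ^ (a + θ - 1 + θ - 1) * F''))) r :=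
  (((hasDerivAt_rpow_mul_comp_rpow hr (hF _ (rpow_pos_of_pos hr θ)).hasDerivAt).const_mul a).add
    ((hasDerivAt_rpow_mul_comp_rpow hr hF').const_mul θ)).congr_of_eventuallyEq
      (deriv_rpow_mul_comp_rpow_eventuallyEq hF hr)

theorem radial_laplacian_rpow_mul_comp_rpow (N : ℝ) (hF : ∀ z, 0 < z → DifferentiableAt ℝ F z)
    (hr : 0 < r) (hF' : DifferentiableAt ℝ (deriv F) (r ^ θ)) :
    deriv (deriv fun ρ => ρ ^ a * F (ρ ^ θ)) r
        + (N - 1) / r * deriv (fun ρ => ρ ^ a * F (ρ ^ θ)) r =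
      r ^ (a + 2 * θ - 2) * (θ ^ 2 * deriv (deriv F) (r ^ θ)
        + θ * (2 * a + θ + N - 2) / r ^ θ * deriv F (r ^ θ)
        + a * (a + N - 2) / (r ^ θ) ^ 2 * F (r ^ θ)) := by
  rw [(hasDerivAt_deriv_rpow_mul_comp_rpow hF hr hF'.hasDerivAt).deriv,
    (hasDerivAt_rpow_mul_comp_rpow hr (hF _ (rpow_pos_of_pos hr θ)).hasDerivAt).deriv]
  have hsplit (k : ℝ) (e : ℝ) (he : e = a - 2 + k) : r ^ e = r ^ (a - 2) * r ^ k := by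
    rw [he, rpow_add hr]
  rw [hsplit 0 (a - 1 - 1) (by ring), hsplit θ (a - 1 + θ - 1) (by ring),
    hsplit θ (a + θ - 1 - 1) (by ring), hsplit (θ + θ) (a + θ - 1 + θ - 1) (by ring),
    hsplit (θ + θ) (a + 2 * θ - 2) (by ring), hsplit (1 : ℝ) (a - 1) (by ring),
    hsplit (θ + 1) (a + θ - 1) (by ring), rpow_add hr, rpow_add hr, rpow_zero, rpow_one]
  field_simp
  ring

end RadialChangeOfVariables

lemma rpow_mul_comp_rpow_rpow_eventuallyEq {v : ℝ → ℝ} {δ θ m r : ℝ}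
    (hv : ∀ z, 0 < z → 0 ≤ v z) (hr : 0 < r) :
    (fun ρ => (ρ ^ δ * v (ρ ^ θ)) ^ m) =ᶠ[𝓝 r] fun ρ => ρ ^ (m * δ) * v (ρ ^ θ) ^ m := by
  filter_upwards [Ioi_mem_nhds hr] with ρ (hρ : 0 < ρ)
  rw [mul_rpow (rpow_nonneg hρ.le δ) (hv _ (rpow_pos_of_pos hρ θ)), ← rpow_mul hρ.le, mul_comm δ m]

theorem statement0_general (N m p σ₁ σ₂ δ θ C T : ℝ) (hθ : 0 < θ) (hC : 0 < C)
    (hcomp : (m - 1) * δ + 2 * θ - σ₁ - 2 = 0)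
    (w : ℝ → ℝ → ℝ)
    (hpos : ∀ z : ℝ, 0 < z → ∀ τ ∈ Ioo (0:ℝ) T, 0 < w z τ)
    (hdt : ∀ z : ℝ, 0 < z → ∀ τ ∈ Ioo (0:ℝ) T,
      DifferentiableAt ℝ (fun τ' => w z τ') τ)
    (hdz : ∀ z : ℝ, 0 < z → ∀ τ ∈ Ioo (0:ℝ) T,
      DifferentiableAt ℝ (fun ζ => w ζ τ ^ m) z ∧
      DifferentiableAt ℝ (deriv (fun ζ => w ζ τ ^ m)) z)
    (heq : ∀ z : ℝ, 0 < z → ∀ τ ∈ Ioo (0:ℝ) T,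
      C * deriv (fun τ' => w z τ') τ =
        θ ^ 2 * deriv (deriv (fun ζ => w ζ τ ^ m)) z
          + (θ * (2 * m * δ + θ + N - 2) / z) * deriv (fun ζ => w ζ τ ^ m) z
          + (m * δ * (m * δ + N - 2) / z ^ 2) * w z τ ^ m
          + z ^ ((σ₂ - σ₁ + δ * (p - 1)) / θ) * w z τ ^ p) :
    IsClassicalRadialSolution N m p σ₁ σ₂ (Ioo 0 (T / C))
      (fun r t => r ^ δ * w (r ^ θ) (C * t)) := by
  intro r hr t ht
  have hrθ : 0 < r ^ θ := rpow_pos_of_pos hr θ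
  have hτ : C * t ∈ Ioo (0 : ℝ) T :=
    ⟨mul_pos hC ht.1, by rw [mul_comm]; exact (lt_div_iff₀ hC).mp ht.2⟩
  have hw : 0 < w (r ^ θ) (C * t) := hpos _ hrθ _ hτ
  have hF (z : ℝ) (hz : 0 < z) := (hdz z hz _ hτ).1
  have hpow := rpow_mul_comp_rpow_rpow_eventuallyEq (δ := δ) (θ := θ) (m := m)
    (fun z hz => (hpos z hz _ hτ).le) hr
  have hdiff := hasDerivAt_rpow_mul_comp_rpow (a := m * δ) hr (hF _ hrθ).hasDerivAt
  have hdiff' :=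
    hasDerivAt_deriv_rpow_mul_comp_rpow (a := m * δ) hF hr (hdz _ hrθ _ hτ).2.hasDerivAt
  have htime : HasDerivAt (fun t' => r ^ δ * w (r ^ θ) (C * t'))
      (r ^ δ * (deriv (fun τ' => w (r ^ θ) τ') (C * t) * C)) t :=
    ((hdt _ hrθ _ hτ).hasDerivAt.comp t (hasDerivAt_const_mul C)).const_mul _
  refine ⟨mul_pos (rpow_pos_of_pos hr δ) hw, htime.differentiableAt,
    hpow.differentiableAt_iff.mpr hdiff.differentiableAt,
    hpow.deriv.differentiableAt_iff.mpr hdiff'.differentiableAt, ?_⟩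
  beta_reduce
  rw [htime.deriv, hpow.deriv.deriv_eq, hpow.deriv_eq,
    radial_laplacian_rpow_mul_comp_rpow N hF hr (hdz _ hrθ _ hτ).2]
  have hweights : r ^ σ₁ * r ^ δ = r ^ (m * δ + 2 * θ - 2) :=
    rpow_mul_rpow_of_add_eq hr (by linear_combination -hcomp)
  have hsource : r ^ (m * δ + 2 * θ - 2) * (r ^ θ) ^ ((σ₂ - σ₁ + δ * (p - 1)) / θ) =
      r ^ σ₂ * r ^ (δ * p) := by
    rw [← rpow_mul hr.le, mul_div_cancel₀ _ hθ.ne', ← rpow_add hr, ← rpow_add hr]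
    congr 1
    linear_combination hcomp
  have hup : (r ^ δ * w (r ^ θ) (C * t)) ^ p = r ^ (δ * p) * w (r ^ θ) (C * t) ^ p := by
    rw [mul_rpow (rpow_nonneg hr.le δ) hw.le, ← rpow_mul hr.le]
  linear_combination (deriv (fun τ' => w (r ^ θ) τ') (C * t) * C) * hweights
    + r ^ (m * δ + 2 * θ - 2) * heq _ hrθ _ hτ + w (r ^ θ) (C * t) ^ p * hsource
    - r ^ σ₂ * hup

theorem statement0 (N m p σ₁ σ₂ δ θ C T : ℝ) (hm : 0 < m) (hθ : 0 < θ) (hC : 0 < C)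
    (hcomp : (m - 1) * δ + 2 * θ - σ₁ - 2 = 0) (hT : 0 < T)
    (w : ℝ → ℝ → ℝ)
    (hpos : ∀ z : ℝ, 0 < z → ∀ τ ∈ Ioo (0:ℝ) T, 0 < w z τ)
    (hdt : ∀ z : ℝ, 0 < z → ∀ τ ∈ Ioo (0:ℝ) T,
      DifferentiableAt ℝ (fun τ' => w z τ') τ)
    (hdz : ∀ z : ℝ, 0 < z → ∀ τ ∈ Ioo (0:ℝ) T,
      DifferentiableAt ℝ (fun ζ => w ζ τ ^ m) z ∧
      DifferentiableAt ℝ (deriv (fun ζ => w ζ τ ^ m)) z)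
    (heq : ∀ z : ℝ, 0 < z → ∀ τ ∈ Ioo (0:ℝ) T,
      C * deriv (fun τ' => w z τ') τ =
        θ ^ 2 * deriv (deriv (fun ζ => w ζ τ ^ m)) z
          + (θ * (2 * m * δ + θ + N - 2) / z) * deriv (fun ζ => w ζ τ ^ m) z
          + (m * δ * (m * δ + N - 2) / z ^ 2) * w z τ ^ m
          + z ^ ((σ₂ - σ₁ + δ * (p - 1)) / θ) * w z τ ^ p) :
    IsClassicalRadialSolution N m p σ₁ σ₂ (Ioo 0 (T / C))
      (fun r t => r ^ δ * w (r ^ θ) (C * t)) :=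
  statement0_general N m p σ₁ σ₂ δ θ C T hθ hC hcomp w hpos hdt hdz heq
end
end

section
/- Let N, m, p, σ₁, σ₂ be real numbers with m > 0, σ₁ > -2 and σ₂ ≠ -2. Define θ := (σ₁+2)/2, N̄ := 2(N+σ₁)/(σ₁+2), σ := 2(σ₂-σ₁)/(σ₁+2), a := θ^{-2/(σ+2)} and C := θ^{2σ/(σ+2)}. Let T > 0 and suppose w : (0,∞) × (0,T) → (0,∞) is differentiable in time, s ↦ w(s,τ)^m is twice differentiable, and w satisfies ∂_τ w(s,τ) = ∂_ss(w^m)(s,τ) + ((N̄-1)/s) ∂_s(w^m)(s,τ) + s^{σ} w(s,τ)^p for all s > 0, τ ∈ (0,T). Then u(r,t) := w(a r^θ, C t) is a classical radial solution of (E)[N,m,p,σ₁,σ₂] on (0,∞) × (0, T/C). -/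
open Real Set

noncomputable section

open Filter Topology

/-!
The substitution `s = a r^θ` turns `∂_rr + ((N-1)/r) ∂_r` into
`(a θ r^{θ-1})² (∂_ss + ((N̄-1)/s) ∂_s)`, because `θ (N̄ - 1) = N + θ - 2`. With
`θ = (σ₁+2)/2` the factor `(a θ r^{θ-1})² = a²θ² r^{σ₁}` is exactly `r^{σ₁}` times the time
scale `C = a²θ²`, and the choice of `a` makes `C a^σ = 1`, so the source term `s^σ w^p`
becomes `r^{σ₂} u^p`.
-/

section ScaledPower

variable {g : ℝ → ℝ} {a θ r : ℝ}

theorem hasDerivAt_scaledRpow (a : ℝ) (hr : 0 < r) :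
    HasDerivAt (fun ρ : ℝ => a * ρ ^ θ) (a * θ * r ^ (θ - 1)) r := by
  simpa only [mul_assoc] using (hasDerivAt_rpow_const (Or.inl hr.ne')).const_mul a

theorem hasDerivAt_comp_scaledRpow (hr : 0 < r) (hg : DifferentiableAt ℝ g (a * r ^ θ)) :
    HasDerivAt (fun ρ => g (a * ρ ^ θ)) (deriv g (a * r ^ θ) * (a * θ * r ^ (θ - 1))) r :=
  hg.hasDerivAt.comp r (hasDerivAt_scaledRpow a hr)

theorem deriv_comp_scaledRpow_eventuallyEq (ha : 0 < a) (hr : 0 < r)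
    (hg : ∀ s, 0 < s → DifferentiableAt ℝ g s) :
    deriv (fun ρ => g (a * ρ ^ θ)) =ᶠ[𝓝 r]
      fun ρ => deriv g (a * ρ ^ θ) * (a * θ * ρ ^ (θ - 1)) := by
  filter_upwards [eventually_gt_nhds hr] with ρ hρ
  exact (hasDerivAt_comp_scaledRpow hρ (hg _ (mul_pos ha (rpow_pos_of_pos hρ θ)))).deriv

theorem hasDerivAt_deriv_comp_scaledRpow (ha : 0 < a) (hr : 0 < r)
    (hg : ∀ s, 0 < s → DifferentiableAt ℝ g s)
    (hg' : DifferentiableAt ℝ (deriv g) (a * r ^ θ)) :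
    HasDerivAt (deriv fun ρ => g (a * ρ ^ θ))
      (deriv (deriv g) (a * r ^ θ) * (a * θ * r ^ (θ - 1)) * (a * θ * r ^ (θ - 1))
        + deriv g (a * r ^ θ) * (a * θ * ((θ - 1) * r ^ (θ - 1 - 1)))) r := by
  have hφ' : HasDerivAt (fun ρ : ℝ => a * θ * ρ ^ (θ - 1))
      (a * θ * ((θ - 1) * r ^ (θ - 1 - 1))) r :=
    (hasDerivAt_rpow_const (Or.inl hr.ne')).const_mul (a * θ)
  exact ((hasDerivAt_comp_scaledRpow hr hg').mul hφ').congr_of_eventuallyEq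
    (deriv_comp_scaledRpow_eventuallyEq ha hr hg)

theorem radialLaplacian_comp_scaledRpow {N Nb : ℝ} (hNb : θ * (Nb - 1) = N + θ - 2)
    (ha : 0 < a) (hr : 0 < r) (hg : ∀ s, 0 < s → DifferentiableAt ℝ g s)
    (hg' : DifferentiableAt ℝ (deriv g) (a * r ^ θ)) :
    DifferentiableAt ℝ (deriv fun ρ => g (a * ρ ^ θ)) r ∧
      deriv (deriv fun ρ => g (a * ρ ^ θ)) r
          + (N - 1) / r * deriv (fun ρ => g (a * ρ ^ θ)) r =
        (a * θ * r ^ (θ - 1)) ^ 2 *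
          (deriv (deriv g) (a * r ^ θ) + (Nb - 1) / (a * r ^ θ) * deriv g (a * r ^ θ)) := by
  have h2 := hasDerivAt_deriv_comp_scaledRpow ha hr hg hg'
  have hs : 0 < a * r ^ θ := mul_pos ha (rpow_pos_of_pos hr θ)
  refine ⟨h2.differentiableAt, ?_⟩
  rw [h2.deriv, (hasDerivAt_comp_scaledRpow hr (hg _ hs)).deriv]
  generalize deriv (deriv g) (a * r ^ θ) = A
  generalize deriv g (a * r ^ θ) = B
  have hθ1 : r ^ (θ - 1) = r ^ (θ - 2) * r := by
    rw [← rpow_add_one hr.ne']; ring_nf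
  have hθ0 : r ^ θ = r ^ (θ - 2) * r * r := by
    rw [← hθ1, ← rpow_add_one hr.ne']; ring_nf
  rw [show θ - 1 - 1 = θ - 2 by ring, hθ1, hθ0]
  field_simp
  linear_combination (-θ * B) * hNb

end ScaledPower

section Exponents

variable {σ₁ θ σ a C : ℝ}

theorem rpow_sq_eq_rpow_of_two_mul {b r : ℝ} (hr : 0 < r) (h : 2 * (θ - 1) = σ₁) :
    (b * r ^ (θ - 1)) ^ 2 = b ^ 2 * r ^ σ₁ := by
  rw [mul_pow, ← rpow_mul_natCast hr.le, Nat.cast_ofNat, mul_comm (θ - 1) 2, h]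

theorem scaling_eq_sq (hθ : 0 < θ) (hσ : σ + 2 ≠ 0) (ha : a = θ ^ (-2 / (σ + 2)))
    (hC : C = θ ^ (2 * σ / (σ + 2))) : C = (a * θ) ^ 2 := by
  rw [hC, ha, mul_pow, ← rpow_natCast, ← rpow_natCast θ, ← rpow_mul hθ.le,
    ← rpow_add hθ]
  congr 1
  field_simp
  ring

theorem scaling_mul_rpow_eq_one (hθ : 0 < θ) (hσ : σ + 2 ≠ 0) (ha : a = θ ^ (-2 / (σ + 2)))
    (hC : C = θ ^ (2 * σ / (σ + 2))) : C * a ^ σ = 1 := by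
  rw [hC, ha, ← rpow_mul hθ.le, ← rpow_add hθ]
  convert rpow_zero θ using 2
  field_simp
  ring

end Exponents

theorem statement1_general (N m p σ₁ σ₂ : ℝ) (hσ₁ : -2 < σ₁) (hσ₂ : σ₂ ≠ -2)
    (θ Nb σ a C T : ℝ)
    (hθ : θ = (σ₁ + 2) / 2) (hNb : Nb = 2 * (N + σ₁) / (σ₁ + 2))
    (hσ : σ = 2 * (σ₂ - σ₁) / (σ₁ + 2))
    (ha : a = θ ^ (-2 / (σ + 2))) (hC : C = θ ^ (2 * σ / (σ + 2)))
    (w : ℝ → ℝ → ℝ)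
    (hpos : ∀ s : ℝ, 0 < s → ∀ τ ∈ Ioo (0:ℝ) T, 0 < w s τ)
    (hdt : ∀ s : ℝ, 0 < s → ∀ τ ∈ Ioo (0:ℝ) T,
      DifferentiableAt ℝ (fun τ' => w s τ') τ)
    (hds : ∀ s : ℝ, 0 < s → ∀ τ ∈ Ioo (0:ℝ) T,
      DifferentiableAt ℝ (fun ζ => w ζ τ ^ m) s ∧
      DifferentiableAt ℝ (deriv (fun ζ => w ζ τ ^ m)) s)
    (heq : ∀ s : ℝ, 0 < s → ∀ τ ∈ Ioo (0:ℝ) T,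
      deriv (fun τ' => w s τ') τ =
        deriv (deriv (fun ζ => w ζ τ ^ m)) s
          + ((Nb - 1) / s) * deriv (fun ζ => w ζ τ ^ m) s
          + s ^ σ * w s τ ^ p) :
    IsClassicalRadialSolution N m p σ₁ σ₂ (Ioo 0 (T / C))
      (fun r t => w (a * r ^ θ) (C * t)) := by
  have hθ0 : 0 < θ := by rw [hθ]; linarith
  have hσ₁2 : σ₁ + 2 ≠ 0 := by linarith
  have hσ2 : σ + 2 ≠ 0 := by
    rw [hσ, div_add' _ _ _ hσ₁2]
    exact div_ne_zero (by contrapose! hσ₂; linarith) hσ₁2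
  have ha0 : 0 < a := ha ▸ rpow_pos_of_pos hθ0 _
  have hCsq := scaling_eq_sq hθ0 hσ2 ha hC
  have hC0 : 0 < C := by rw [hCsq]; positivity
  intro r hr t ht
  have hτ : C * t ∈ Ioo 0 T :=
    ⟨mul_pos hC0 ht.1, (lt_div_iff₀' hC0).mp ht.2⟩
  have hs : 0 < a * r ^ θ := mul_pos ha0 (rpow_pos_of_pos hr θ)
  have htime : HasDerivAt (fun τ => w (a * r ^ θ) (C * τ))
      (deriv (fun τ => w (a * r ^ θ) τ) (C * t) * C) t :=
    (hdt _ hs _ hτ).hasDerivAt.comp t (hasDerivAt_const_mul C)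
  obtain ⟨hdiff₂, hlap⟩ := radialLaplacian_comp_scaledRpow (N := N) (Nb := Nb)
    (by rw [hθ, hNb]; field_simp; ring) ha0 hr (fun s hs ↦ (hds s hs _ hτ).1) (hds _ hs _ hτ).2
  have hjac : (a * θ * r ^ (θ - 1)) ^ 2 = C * r ^ σ₁ := by
    rw [rpow_sq_eq_rpow_of_two_mul (σ₁ := σ₁) hr (by linarith), hCsq]
  have hsource : C * r ^ σ₁ * (a * r ^ θ) ^ σ = r ^ σ₂ := by
    rw [mul_rpow ha0.le (rpow_nonneg hr.le θ), ← rpow_mul hr.le,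
      show θ * σ = σ₂ - σ₁ by rw [hθ, hσ]; field_simp, mul_mul_mul_comm,
      scaling_mul_rpow_eq_one hθ0 hσ2 ha hC, ← rpow_add hr, one_mul, add_sub_cancel]
  refine ⟨hpos _ hs _ hτ, htime.differentiableAt,
    (hasDerivAt_comp_scaledRpow hr (hds _ hs _ hτ).1).differentiableAt, hdiff₂, ?_⟩
  rw [htime.deriv, hlap, heq _ hs _ hτ, hjac, ← hsource]
  ring

theorem statement1 (N m p σ₁ σ₂ : ℝ) (hm : 0 < m) (hσ₁ : -2 < σ₁) (hσ₂ : σ₂ ≠ -2)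
    (θ Nb σ a C T : ℝ)
    (hθ : θ = (σ₁ + 2) / 2) (hNb : Nb = 2 * (N + σ₁) / (σ₁ + 2))
    (hσ : σ = 2 * (σ₂ - σ₁) / (σ₁ + 2))
    (ha : a = θ ^ (-2 / (σ + 2))) (hC : C = θ ^ (2 * σ / (σ + 2))) (hT : 0 < T)
    (w : ℝ → ℝ → ℝ)
    (hpos : ∀ s : ℝ, 0 < s → ∀ τ ∈ Ioo (0:ℝ) T, 0 < w s τ)
    (hdt : ∀ s : ℝ, 0 < s → ∀ τ ∈ Ioo (0:ℝ) T,
      DifferentiableAt ℝ (fun τ' => w s τ') τ)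
    (hds : ∀ s : ℝ, 0 < s → ∀ τ ∈ Ioo (0:ℝ) T,
      DifferentiableAt ℝ (fun ζ => w ζ τ ^ m) s ∧
      DifferentiableAt ℝ (deriv (fun ζ => w ζ τ ^ m)) s)
    (heq : ∀ s : ℝ, 0 < s → ∀ τ ∈ Ioo (0:ℝ) T,
      deriv (fun τ' => w s τ') τ =
        deriv (deriv (fun ζ => w ζ τ ^ m)) s
          + ((Nb - 1) / s) * deriv (fun ζ => w ζ τ ^ m) s
          + s ^ σ * w s τ ^ p) :
    IsClassicalRadialSolution N m p σ₁ σ₂ (Ioo 0 (T / C))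
      (fun r t => w (a * r ^ θ) (C * t)) :=
  statement1_general N m p σ₁ σ₂ hσ₁ hσ₂ θ Nb σ a C T hθ hNb hσ ha hC w hpos hdt hds heq
end
end

section
/- Let N, m, p, σ₁, σ₂ be real numbers with m > 0 and m(N+σ₁) - N + 2 > 0. Define δ := -(N-2)/m, θ := (m(N+σ₁)-N+2)/(2m), N̄ := 2(m(σ₁+2)-N+2)/(m(σ₁+N)-N+2) and σ := -2(m(σ₁-σ₂)+(N-2)(p-1))/(m(σ₁+N)-N+2), and assume σ ≠ -2; set a := θ^{-2/(σ+2)} and C := θ^{2σ/(σ+2)}. Let T > 0 and suppose w : (0,∞) × (0,T) → (0,∞) is differentiable in time, s ↦ w(s,τ)^m is twice differentiable, and w satisfies ∂_τ w(s,τ) = ∂_ss(w^m)(s,τ) + ((N̄-1)/s) ∂_s(w^m)(s,τ) + s^{σ} w(s,τ)^p for all s > 0, τ ∈ (0,T). Then u(r,t) := r^δ w(a r^θ, C t) is a classical radial solution of (E)[N,m,p,σ₁,σ₂] on (0,∞) × (0, T/C). -/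
open Real Set

noncomputable section

/-!
Writing `s = a r^θ`, the map `ρ ↦ ρ^k f(a ρ^θ)` turns the radial Laplacian in dimension `N` into
`r^(k-2) (θ² s² f'' + θ (2k + θ + N - 2) s f' + k (k + N - 2) f)`. For `k = δ m` the zeroth-order
term vanishes and the first-order coefficient is `θ² (N̄ - 1)`, so the equation for `w` transforms
into the one for `u`: `C = θ² a²` matches the time derivatives and `C a^σ = 1` the source terms.
-/

open Filter Topology

section PowerChangeOfVariables

variable {f h : ℝ → ℝ} {k a θ r : ℝ}

theorem hasDerivAt_comp_const_mul_rpow (hr : 0 < r) (hh : DifferentiableAt ℝ h (a * r ^ θ)) :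
    HasDerivAt (fun ρ => h (a * ρ ^ θ)) (θ * (a * r ^ θ) * deriv h (a * r ^ θ) / r) r := by
  have hin : HasDerivAt (fun ρ => a * ρ ^ θ) (a * (θ * r ^ (θ - 1))) r :=
    (hasDerivAt_rpow_const (Or.inl hr.ne')).const_mul a
  refine (hh.hasDerivAt.comp r hin).congr_deriv ?_
  rw [rpow_sub_one hr.ne']
  ring

theorem hasDerivAt_rpow_mul_comp_const_mul_rpow (hr : 0 < r)
    (hf : DifferentiableAt ℝ f (a * r ^ θ)) :
    HasDerivAt (fun ρ => ρ ^ k * f (a * ρ ^ θ))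
      (r ^ k * (k * f (a * r ^ θ) + θ * (a * r ^ θ) * deriv f (a * r ^ θ)) / r) r := by
  refine ((hasDerivAt_rpow_const (p := k) (Or.inl hr.ne')).mul
    (hasDerivAt_comp_const_mul_rpow hr hf)).congr_deriv ?_
  rw [rpow_sub_one hr.ne']
  field_simp

theorem hasDerivAt_deriv_rpow_mul_comp_const_mul_rpow (hr : 0 < r) (ha : 0 < a)
    (hf : ∀ s, 0 < s → DifferentiableAt ℝ f s) (hf' : DifferentiableAt ℝ (deriv f) (a * r ^ θ)) :
    HasDerivAt (deriv fun ρ => ρ ^ k * f (a * ρ ^ θ))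
      (r ^ k / r ^ 2 * (θ ^ 2 * (a * r ^ θ) ^ 2 * deriv (deriv f) (a * r ^ θ)
        + θ * (2 * k + θ - 1) * (a * r ^ θ) * deriv f (a * r ^ θ) + k * (k - 1) * f (a * r ^ θ)))
      r := by
  have hs : ∀ ρ, 0 < ρ → 0 < a * ρ ^ θ := fun ρ hρ => mul_pos ha (rpow_pos_of_pos hρ θ)
  have hderiv : deriv (fun ρ => ρ ^ k * f (a * ρ ^ θ)) =ᶠ[𝓝 r] fun ρ =>
      ρ ^ k * (k * f (a * ρ ^ θ) + θ * (a * ρ ^ θ) * deriv f (a * ρ ^ θ)) / ρ := by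
    filter_upwards [Ioi_mem_nhds hr] with ρ hρ
    exact (hasDerivAt_rpow_mul_comp_const_mul_rpow hρ (hf _ (hs ρ hρ))).deriv
  have hfs := hasDerivAt_comp_const_mul_rpow hr (hf _ (hs r hr))
  have hf's := hasDerivAt_comp_const_mul_rpow hr hf'
  have hid := hasDerivAt_comp_const_mul_rpow (h := id) (a := a) (θ := θ) hr differentiableAt_id
  simp only [deriv_id, mul_one] at hid
  refine HasDerivAt.congr_of_eventuallyEq ?_ hderiv
  refine (((hasDerivAt_rpow_const (p := k) (Or.inl hr.ne')).mul
    ((hfs.const_mul k).add ((hid.const_mul θ).mul hf's))).div (hasDerivAt_id r) hr.ne').congr_deriv ?_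
  rw [rpow_sub_one hr.ne']
  simp only [Pi.mul_apply, Pi.add_apply, id]
  field_simp
  ring

theorem radial_rpow_mul_comp_const_mul_rpow (N : ℝ) (hr : 0 < r) (ha : 0 < a)
    (hf : ∀ s, 0 < s → DifferentiableAt ℝ f s) (hf' : DifferentiableAt ℝ (deriv f) (a * r ^ θ)) :
    deriv (deriv fun ρ => ρ ^ k * f (a * ρ ^ θ)) r
        + ((N - 1) / r) * deriv (fun ρ => ρ ^ k * f (a * ρ ^ θ)) r =
      r ^ k / r ^ 2 * (θ ^ 2 * (a * r ^ θ) ^ 2 * deriv (deriv f) (a * r ^ θ)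
        + θ * (2 * k + θ + N - 2) * (a * r ^ θ) * deriv f (a * r ^ θ)
        + k * (k + N - 2) * f (a * r ^ θ)) := by
  rw [(hasDerivAt_deriv_rpow_mul_comp_const_mul_rpow hr ha hf hf').deriv,
    (hasDerivAt_rpow_mul_comp_const_mul_rpow hr (hf _ (mul_pos ha (rpow_pos_of_pos hr θ)))).deriv]
  field_simp
  ring

end PowerChangeOfVariables

theorem isClassicalRadialSolution_of_power_rescaling {N m p σ₁ σ₂ δ θ Nb σ a C T : ℝ}
    (ha : 0 < a) (hC : 0 < C) (hk : δ * m + N - 2 = 0)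
    (hNb : 2 * (δ * m) + θ + N - 2 = θ * (Nb - 1)) (hσ₁ : σ₁ + δ = δ * m + 2 * θ - 2)
    (hσ₂ : σ₁ + δ + θ * σ = σ₂ + δ * p) (hCa : C = θ ^ 2 * a ^ 2) (hCaσ : C * a ^ σ = 1)
    {w : ℝ → ℝ → ℝ}
    (hpos : ∀ s : ℝ, 0 < s → ∀ τ ∈ Ioo (0:ℝ) T, 0 < w s τ)
    (hdt : ∀ s : ℝ, 0 < s → ∀ τ ∈ Ioo (0:ℝ) T, DifferentiableAt ℝ (fun τ' => w s τ') τ)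
    (hds : ∀ s : ℝ, 0 < s → ∀ τ ∈ Ioo (0:ℝ) T,
      DifferentiableAt ℝ (fun ζ => w ζ τ ^ m) s ∧
      DifferentiableAt ℝ (deriv (fun ζ => w ζ τ ^ m)) s)
    (heq : ∀ s : ℝ, 0 < s → ∀ τ ∈ Ioo (0:ℝ) T,
      deriv (fun τ' => w s τ') τ =
        deriv (deriv (fun ζ => w ζ τ ^ m)) s
          + ((Nb - 1) / s) * deriv (fun ζ => w ζ τ ^ m) s
          + s ^ σ * w s τ ^ p) :
    IsClassicalRadialSolution N m p σ₁ σ₂ (Ioo 0 (T / C))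
      (fun r t => r ^ δ * w (a * r ^ θ) (C * t)) := by
  intro r hr t ⟨ht0, htT⟩
  have hτ : C * t ∈ Ioo 0 T := ⟨mul_pos hC ht0, by rwa [lt_div_iff₀ hC, mul_comm] at htT⟩
  set s := a * r ^ θ with hs_def
  have hs : 0 < s := mul_pos ha (rpow_pos_of_pos hr θ)
  have hws := hpos s hs _ hτ
  have hv : ∀ ζ, 0 < ζ → DifferentiableAt ℝ (fun ζ => w ζ (C * t) ^ m) ζ :=
    fun ζ hζ => (hds ζ hζ _ hτ).1
  have hv' := (hds s hs _ hτ).2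
  have hum : (fun ρ => (ρ ^ δ * w (a * ρ ^ θ) (C * t)) ^ m) =ᶠ[𝓝 r]
      fun ρ => ρ ^ (δ * m) * (fun ζ => w ζ (C * t) ^ m) (a * ρ ^ θ) := by
    filter_upwards [Ioi_mem_nhds hr] with ρ hρ
    rw [mul_rpow (rpow_nonneg hρ.le δ) (hpos _ (mul_pos ha (rpow_pos_of_pos hρ θ)) _ hτ).le,
      ← rpow_mul hρ.le]
  have htime : HasDerivAt (fun τ => r ^ δ * w s (C * τ))
      (r ^ δ * (deriv (fun τ => w s τ) (C * t) * C)) t :=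
    (((hdt s hs _ hτ).hasDerivAt.comp t ((hasDerivAt_id t).const_mul C)).congr_deriv
      (by simp)).const_mul _
  refine ⟨mul_pos (rpow_pos_of_pos hr δ) hws, htime.differentiableAt,
    hum.differentiableAt_iff.mpr (hasDerivAt_rpow_mul_comp_const_mul_rpow hr (hv s hs)).differentiableAt,
    hum.deriv.differentiableAt_iff.mpr
      (hasDerivAt_deriv_rpow_mul_comp_const_mul_rpow hr ha hv hv').differentiableAt, ?_⟩
  have hscale : r ^ (δ * m) / r ^ 2 * (θ ^ 2 * s ^ 2) = C * (r ^ σ₁ * r ^ δ) := by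
    rw [← rpow_add hr, hσ₁, rpow_sub hr, rpow_add hr, two_mul, rpow_add hr, rpow_two, hCa, hs_def]
    ring
  have hsource : C * (r ^ σ₁ * r ^ δ) * s ^ σ = r ^ σ₂ * r ^ (δ * p) := by
    calc C * (r ^ σ₁ * r ^ δ) * s ^ σ = C * a ^ σ * (r ^ σ₁ * r ^ δ * r ^ (θ * σ)) := by
          rw [hs_def, mul_rpow ha.le (rpow_nonneg hr.le θ), ← rpow_mul hr.le]; ring
      _ = r ^ σ₂ * r ^ (δ * p) := by
          rw [hCaσ, ← rpow_add hr, ← rpow_add hr, hσ₂, rpow_add hr, one_mul]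
  rw [hum.deriv.deriv_eq, hum.deriv_eq, radial_rpow_mul_comp_const_mul_rpow N hr ha hv hv', hk,
    hNb, htime.deriv, heq s hs _ hτ, mul_rpow (rpow_nonneg hr.le δ) hws.le, ← rpow_mul hr.le]
  set A := deriv (deriv fun ζ => w ζ (C * t) ^ m) s
  set B := deriv (fun ζ => w ζ (C * t) ^ m) s
  linear_combination (-(A + (Nb - 1) * B * s⁻¹)) * hscale + w s (C * t) ^ p * hsource
    + (Nb - 1) * B * (r ^ (δ * m) / r ^ 2) * θ ^ 2 * s * mul_inv_cancel₀ hs.ne'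

theorem statement2_general (N m p σ₁ σ₂ : ℝ) (hm : 0 < m)
    (hpos' : 0 < m * (N + σ₁) - N + 2)
    (δ θ Nb σ a C T : ℝ)
    (hδ : δ = -(N - 2) / m) (hθ : θ = (m * (N + σ₁) - N + 2) / (2 * m))
    (hNb : Nb = 2 * (m * (σ₁ + 2) - N + 2) / (m * (σ₁ + N) - N + 2))
    (hσ : σ = -2 * (m * (σ₁ - σ₂) + (N - 2) * (p - 1)) / (m * (σ₁ + N) - N + 2))
    (hσ2 : σ ≠ -2)
    (ha : a = θ ^ (-2 / (σ + 2))) (hC : C = θ ^ (2 * σ / (σ + 2)))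
    (w : ℝ → ℝ → ℝ)
    (hpos : ∀ s : ℝ, 0 < s → ∀ τ ∈ Ioo (0:ℝ) T, 0 < w s τ)
    (hdt : ∀ s : ℝ, 0 < s → ∀ τ ∈ Ioo (0:ℝ) T,
      DifferentiableAt ℝ (fun τ' => w s τ') τ)
    (hds : ∀ s : ℝ, 0 < s → ∀ τ ∈ Ioo (0:ℝ) T,
      DifferentiableAt ℝ (fun ζ => w ζ τ ^ m) s ∧
      DifferentiableAt ℝ (deriv (fun ζ => w ζ τ ^ m)) s)
    (heq : ∀ s : ℝ, 0 < s → ∀ τ ∈ Ioo (0:ℝ) T,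
      deriv (fun τ' => w s τ') τ =
        deriv (deriv (fun ζ => w ζ τ ^ m)) s
          + ((Nb - 1) / s) * deriv (fun ζ => w ζ τ ^ m) s
          + s ^ σ * w s τ ^ p) :
    IsClassicalRadialSolution N m p σ₁ σ₂ (Ioo 0 (T / C))
      (fun r t => r ^ δ * w (a * r ^ θ) (C * t)) := by
  have hden : m * (σ₁ + N) - N + 2 ≠ 0 := by linarith
  have hθ0 : 0 < θ := hθ ▸ div_pos hpos' (by positivity)
  have hσ2' : σ + 2 ≠ 0 := fun h => hσ2 (by linarith)
  refine isClassicalRadialSolution_of_power_rescaling (ha ▸ rpow_pos_of_pos hθ0 _)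
    (hC ▸ rpow_pos_of_pos hθ0 _) ?_ ?_ ?_ ?_ ?_ ?_ hpos hdt hds heq
  · rw [hδ]; field_simp; ring
  · rw [hδ, hθ, hNb]; field_simp; ring
  · rw [hδ, hθ]; field_simp; ring
  · rw [hδ, hθ, hσ]; field_simp; ring
  · rw [hC, ha, ← rpow_natCast, ← rpow_natCast, ← rpow_mul hθ0.le, ← rpow_add hθ0]
    congr 1
    field_simp
    ring
  · rw [hC, ha, ← rpow_mul hθ0.le, ← rpow_add hθ0, ← rpow_zero θ]
    congr 1
    field_simp
    ring

theorem statement2 (N m p σ₁ σ₂ : ℝ) (hm : 0 < m)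
    (hpos' : 0 < m * (N + σ₁) - N + 2)
    (δ θ Nb σ a C T : ℝ)
    (hδ : δ = -(N - 2) / m) (hθ : θ = (m * (N + σ₁) - N + 2) / (2 * m))
    (hNb : Nb = 2 * (m * (σ₁ + 2) - N + 2) / (m * (σ₁ + N) - N + 2))
    (hσ : σ = -2 * (m * (σ₁ - σ₂) + (N - 2) * (p - 1)) / (m * (σ₁ + N) - N + 2))
    (hσ2 : σ ≠ -2)
    (ha : a = θ ^ (-2 / (σ + 2))) (hC : C = θ ^ (2 * σ / (σ + 2))) (hT : 0 < T)
    (w : ℝ → ℝ → ℝ)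
    (hpos : ∀ s : ℝ, 0 < s → ∀ τ ∈ Ioo (0:ℝ) T, 0 < w s τ)
    (hdt : ∀ s : ℝ, 0 < s → ∀ τ ∈ Ioo (0:ℝ) T,
      DifferentiableAt ℝ (fun τ' => w s τ') τ)
    (hds : ∀ s : ℝ, 0 < s → ∀ τ ∈ Ioo (0:ℝ) T,
      DifferentiableAt ℝ (fun ζ => w ζ τ ^ m) s ∧
      DifferentiableAt ℝ (deriv (fun ζ => w ζ τ ^ m)) s)
    (heq : ∀ s : ℝ, 0 < s → ∀ τ ∈ Ioo (0:ℝ) T,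
      deriv (fun τ' => w s τ') τ =
        deriv (deriv (fun ζ => w ζ τ ^ m)) s
          + ((Nb - 1) / s) * deriv (fun ζ => w ζ τ ^ m) s
          + s ^ σ * w s τ ^ p) :
    IsClassicalRadialSolution N m p σ₁ σ₂ (Ioo 0 (T / C))
      (fun r t => r ^ δ * w (a * r ^ θ) (C * t)) :=
  statement2_general N m p σ₁ σ₂ hm hpos' δ θ Nb σ a C T hδ hθ hNb hσ hσ2 ha hC w hpos hdt hds heq
end
end

section
/- Let N, m, p, σ₁, σ₂ be real numbers with m > 1 and L(σ₁,σ₂) := σ₂(m-1) + 2(p-1) - σ₁(m-p) = 0, and set δ := (σ₁+2)/(m-1). Let I ⊆ ℝ be an open interval and let u be a classical radial solution of (E)[N,m,p,σ₁,σ₂] on (0,∞) × I. Then the function w(y,t) := e^{-δ y} u(e^{y}, t) satisfies, for all y ∈ ℝ and t ∈ I, the equation ∂_t w = ∂_yy(w^m) + ((mN - N + 2 + 2m(σ₁+1))/(m-1)) ∂_y(w^m) + (m(σ₁+2)(mN - N + 2 + mσ₁)/(m-1)²) w^m + w^p. -/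
/-! In the variables `r = e^y`, the radial Laplacian `v'' + (N-1)/r v'` of `v = u^m`, conjugated by
the weight `e^{a y}` with `a = -mδ`, becomes a constant-coefficient operator in `y`. The choice
`δ = (σ₁+2)/(m-1)` makes all powers of `r` in the time derivative and the diffusion match, and
`L(σ₁,σ₂) = 0` makes the power of `r` in the reaction term match as well. -/

open Real Set

noncomputable section

theorem exp_mul_rpow (x s : ℝ) {c : ℝ} (hc : 0 ≤ c) : (exp x * c) ^ s = exp (x * s) * c ^ s := by
  rw [mul_rpow (exp_pos x).le hc, exp_mul]

section LogCoordinates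

variable {v : ℝ → ℝ} {a : ℝ}

theorem hasDerivAt_exp_mul_comp_exp {η : ℝ} (hv : DifferentiableAt ℝ v (exp η)) :
    HasDerivAt (fun η => exp (a * η) * v (exp η))
      (exp (a * η) * (a * v (exp η) + exp η * deriv v (exp η))) η :=
  ((hasDerivAt_const_mul a).exp.mul (hv.hasDerivAt.comp η (hasDerivAt_exp η))).congr_deriv
    (by simp only [Function.comp_apply]; ring)

theorem deriv_exp_mul_comp_exp (hv : ∀ r, 0 < r → DifferentiableAt ℝ v r) :
    deriv (fun η => exp (a * η) * v (exp η)) =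
      fun η => exp (a * η) * (a * v (exp η) + exp η * deriv v (exp η)) :=
  funext fun η => (hasDerivAt_exp_mul_comp_exp (hv _ (exp_pos η))).deriv

theorem deriv_deriv_exp_mul_comp_exp (hv : ∀ r, 0 < r → DifferentiableAt ℝ v r) {y : ℝ}
    (hv' : DifferentiableAt ℝ (deriv v) (exp y)) :
    deriv (deriv fun η => exp (a * η) * v (exp η)) y =
      exp (a * y) * (a ^ 2 * v (exp y) + (2 * a + 1) * exp y * deriv v (exp y)
        + exp y ^ 2 * deriv (deriv v) (exp y)) := by
  have hv_exp := (hv _ (exp_pos y)).hasDerivAt.comp y (hasDerivAt_exp y)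
  have hv'_exp := hv'.hasDerivAt.comp y (hasDerivAt_exp y)
  have h : HasDerivAt (fun η => exp (a * η) * (a * v (exp η) + exp η * deriv v (exp η)))
      (exp (a * y) * a * (a * v (exp y) + exp y * deriv v (exp y)) + exp (a * y) *
        (a * (deriv v (exp y) * exp y) + (exp y * deriv v (exp y)
          + exp y * (deriv (deriv v) (exp y) * exp y)))) y :=
    (hasDerivAt_const_mul a).exp.mul ((hv_exp.const_mul a).add ((hasDerivAt_exp y).mul hv'_exp))
  rw [deriv_exp_mul_comp_exp hv, h.deriv]
  ring

theorem radial_laplacian_in_log_coords (N : ℝ) (hv : ∀ r, 0 < r → DifferentiableAt ℝ v r)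
    {y : ℝ} (hv' : DifferentiableAt ℝ (deriv v) (exp y)) :
    deriv (deriv fun η => exp (a * η) * v (exp η)) y
        + (N - 2 - 2 * a) * deriv (fun η => exp (a * η) * v (exp η)) y
        + a * (a - N + 2) * (exp (a * y) * v (exp y)) =
      exp ((a + 2) * y) * (deriv (deriv v) (exp y) + (N - 1) / exp y * deriv v (exp y)) := by
  rw [deriv_deriv_exp_mul_comp_exp hv hv', deriv_exp_mul_comp_exp hv,
    show (a + 2) * y = a * y + y + y by ring, exp_add, exp_add]
  field_simp
  ring

end LogCoordinates

theorem statement3_general (N m p σ₁ σ₂ : ℝ) (hm : 1 < m)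
    (hL : σ₂ * (m - 1) + 2 * (p - 1) - σ₁ * (m - p) = 0)
    (δ : ℝ) (hδ : δ = (σ₁ + 2) / (m - 1))
    (I : Set ℝ)
    (u : ℝ → ℝ → ℝ)
    (hu : IsClassicalRadialSolution N m p σ₁ σ₂ I u) :
    ∀ y : ℝ, ∀ t ∈ I,
      deriv (fun τ => Real.exp (-δ * y) * u (Real.exp y) τ) t =
        deriv (deriv (fun η => (Real.exp (-δ * η) * u (Real.exp η) t) ^ m)) y
          + ((m * N - N + 2 + 2 * m * (σ₁ + 1)) / (m - 1)) *
              deriv (fun η => (Real.exp (-δ * η) * u (Real.exp η) t) ^ m) y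
          + (m * (σ₁ + 2) * (m * N - N + 2 + m * σ₁) / (m - 1) ^ 2) *
              (Real.exp (-δ * y) * u (Real.exp y) t) ^ m
          + (Real.exp (-δ * y) * u (Real.exp y) t) ^ p := by
  intro y t ht
  obtain ⟨hu_pos, hu_t, -, hv', hpde⟩ := hu (exp y) (exp_pos y) t ht
  have hv : ∀ r, 0 < r → DifferentiableAt ℝ (fun ρ => u ρ t ^ m) r :=
    fun r hr => (hu r hr t ht).2.2.1
  have hm1 : m - 1 ≠ 0 := by linarith
  have hwm : ∀ η, (exp (-δ * η) * u (exp η) t) ^ m = exp (-(m * δ) * η) * u (exp η) t ^ m := by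
    intro η
    rw [exp_mul_rpow _ _ (hu _ (exp_pos η) t ht).1.le]
    ring_nf
  have hB : (m * N - N + 2 + 2 * m * (σ₁ + 1)) / (m - 1) = N - 2 - 2 * -(m * δ) := by
    rw [hδ]; field_simp; ring
  have hC : m * (σ₁ + 2) * (m * N - N + 2 + m * σ₁) / (m - 1) ^ 2 =
      -(m * δ) * (-(m * δ) - N + 2) := by
    rw [hδ]; field_simp; ring
  have hexp_t : exp ((-(m * δ) + 2) * y) * exp y ^ σ₁ = exp (-δ * y) := by
    rw [← exp_mul, ← exp_add, hδ]; congr 1; field_simp; ring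
  have hexp_p : exp ((-(m * δ) + 2) * y) * exp y ^ σ₂ = exp (-δ * y * p) := by
    rw [← exp_mul, ← exp_add, hδ]; congr 1; field_simp; linear_combination y * hL
  simp only [hwm, exp_mul_rpow (-δ * y) p hu_pos.le, hB, hC, deriv_const_mul _ hu_t]
  linear_combination -radial_laplacian_in_log_coords (a := -(m * δ)) N hv hv'
    + exp ((-(m * δ) + 2) * y) * hpde
    - deriv (fun τ => u (exp y) τ) t * hexp_t + u (exp y) t ^ p * hexp_p

theorem statement3 (N m p σ₁ σ₂ : ℝ) (hm : 1 < m)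
    (hL : σ₂ * (m - 1) + 2 * (p - 1) - σ₁ * (m - p) = 0)
    (δ : ℝ) (hδ : δ = (σ₁ + 2) / (m - 1))
    (I : Set ℝ) (hIopen : IsOpen I) (hIconn : I.OrdConnected)
    (u : ℝ → ℝ → ℝ)
    (hu : IsClassicalRadialSolution N m p σ₁ σ₂ I u) :
    ∀ y : ℝ, ∀ t ∈ I,
      deriv (fun τ => Real.exp (-δ * y) * u (Real.exp y) τ) t =
        deriv (deriv (fun η => (Real.exp (-δ * η) * u (Real.exp η) t) ^ m)) y
          + ((m * N - N + 2 + 2 * m * (σ₁ + 1)) / (m - 1)) *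
              deriv (fun η => (Real.exp (-δ * η) * u (Real.exp η) t) ^ m) y
          + (m * (σ₁ + 2) * (m * N - N + 2 + m * σ₁) / (m - 1) ^ 2) *
              (Real.exp (-δ * y) * u (Real.exp y) t) ^ m
          + (Real.exp (-δ * y) * u (Real.exp y) t) ^ p :=
  statement3_general N m p σ₁ σ₂ hm hL δ hδ I u hu
end
end

section
/- Let m > 1 and set σ := √(2(m+1)), A := (m-1)/(2m(m+1)), B := (m-1)²/(m(σ+2)(mσ+m+1)), α := (σ+2)/(σ(m-1)), β := 1/σ, and let T > 0. Define, for s > 0 and τ < T with A - B s^{σ}(T-τ) > 0, the function w(s,τ) := (T-τ)^{-α} ξ^{2/(m-1)} (A - B ξ^{σ})^{1/(m-1)} where ξ := s(T-τ)^{β}. Then w satisfies ∂_τ w(s,τ) = ∂_ss(w^m)(s,τ) + s^{σ} w(s,τ) at every such point; that is, w is an explicit backward self-similar solution of the one-dimensional weighted reaction-diffusion equation ∂_τ w = ∂_ss(w^m) + s^{σ} w (the case p = 1, N̄ = 1, σ = √(2(m+1)) of the weighted equation). -/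
open Real

noncomputable section

/-! Write `k = 1/(m-1)`, `t = T - τ` and `u = A - B s^σ t`. Since `β σ = 1` and `-α + 2 k β = -k`, the
solution is `w = s^{2k} t^{-k} u^k`, so `w^m = t^{-(k+1)} s^{2k+2} u^{k+1}`, and `∂_τ w`, `∂_ss(w^m)`
and `s^σ w` are all `t^{-(k+1)} s^{2k} u^{k-1}` times a polynomial of degree two in `z = t s^σ`.
The equation is then a polynomial identity in `z`: its constant term fixes `A`, its `z²` term
forces `σ² = 2(m+1)`, and its `z` term fixes `B`. -/

open Filter Topology

theorem hasDerivAt_rpow_neg_mul_rpow_sub_mul {k A c T τ : ℝ} (hτ : τ < T)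
    (hu : 0 < A - c * (T - τ)) :
    HasDerivAt (fun τ => (T - τ) ^ (-k) * (A - c * (T - τ)) ^ k)
      (k * A * (T - τ) ^ (-(k + 1)) * (A - c * (T - τ)) ^ (k - 1)) τ := by
  have ht : 0 < T - τ := sub_pos.mpr hτ
  have hdt : HasDerivAt (fun τ => T - τ) (-1) τ := by
    simpa using (hasDerivAt_id τ).const_sub T
  have hdu : HasDerivAt (fun τ => A - c * (T - τ)) c τ := by
    simpa using (hdt.const_mul c).const_sub A
  refine ((hdt.rpow_const (p := -k) (Or.inl ht.ne')).mul
    (hdu.rpow_const (p := k) (Or.inl hu.ne'))).congr_deriv ?_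
  have hpow_t : (T - τ) ^ (-k) = (T - τ) ^ (-(k + 1)) * (T - τ) := by
    rw [← rpow_add_one ht.ne']; congr 1; ring
  have hpow_u : (A - c * (T - τ)) ^ k = (A - c * (T - τ)) ^ (k - 1) * (A - c * (T - τ)) := by
    rw [← rpow_add_one hu.ne', sub_add_cancel]
  rw [show -k - 1 = -(k + 1) by ring, hpow_t, hpow_u]
  ring

theorem eventually_pos_and_pos_sub_mul_rpow {A c σ x : ℝ} (hx : 0 < x)
    (hu : 0 < A - c * x ^ σ) : ∀ᶠ y in 𝓝 x, 0 < y ∧ 0 < A - c * y ^ σ := by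
  have hcont : ContinuousAt (fun y => A - c * y ^ σ) x :=
    continuousAt_const.sub (continuousAt_const.mul (continuousAt_rpow_const x σ (Or.inl hx.ne')))
  exact (eventually_gt_nhds hx).and (hcont.eventually_const_lt hu)

theorem hasDerivAt_rpow_mul_rpow_sub {a b c σ A x : ℝ} (hx : 0 < x)
    (hu : 0 < A - c * x ^ σ) :
    HasDerivAt (fun y => y ^ a * (A - c * y ^ σ) ^ b)
      (x ^ (a - 1) * (A - c * x ^ σ) ^ (b - 1) *
        (a * (A - c * x ^ σ) - b * σ * c * x ^ σ)) x := by
  have hdu : HasDerivAt (fun y => A - c * y ^ σ) (-(c * (σ * x ^ (σ - 1)))) x :=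
    ((hasDerivAt_rpow_const (Or.inl hx.ne')).const_mul c).const_sub A
  refine ((hasDerivAt_rpow_const (p := a) (Or.inl hx.ne')).mul
    (hdu.rpow_const (p := b) (Or.inl hu.ne'))).congr_deriv ?_
  have hmul : x ^ a * x ^ (σ - 1) = x ^ (a - 1) * x ^ σ := by
    rw [← rpow_add hx, ← rpow_add hx]; congr 1; ring
  set u := A - c * x ^ σ
  have hub : u ^ b = u ^ (b - 1) * u := by rw [← rpow_add_one hu.ne', sub_add_cancel]
  rw [hub]
  linear_combination -(b * σ * c * u ^ (b - 1)) * hmul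

theorem deriv_deriv_rpow_mul_rpow_sub {a b c σ A x : ℝ} (hx : 0 < x)
    (hu : 0 < A - c * x ^ σ) :
    deriv (deriv fun y => y ^ a * (A - c * y ^ σ) ^ b) x =
      x ^ (a - 2) * (A - c * x ^ σ) ^ (b - 2) *
        (((a - 1) * (A - c * x ^ σ) - (b - 1) * σ * c * x ^ σ) *
            (a * (A - c * x ^ σ) - b * σ * c * x ^ σ) -
          σ * c * (a + b * σ) * x ^ σ * (A - c * x ^ σ)) := by
  have hderiv : deriv (fun y => y ^ a * (A - c * y ^ σ) ^ b) =ᶠ[𝓝 x] fun y =>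
      y ^ (a - 1) * (A - c * y ^ σ) ^ (b - 1) * (a * (A - c * y ^ σ) - b * σ * c * y ^ σ) := by
    filter_upwards [eventually_pos_and_pos_sub_mul_rpow hx hu] with y ⟨hy, hyu⟩
    exact (hasDerivAt_rpow_mul_rpow_sub hy hyu).deriv
  have hpow : HasDerivAt (fun y => y ^ σ) (σ * x ^ (σ - 1)) x :=
    hasDerivAt_rpow_const (Or.inl hx.ne')
  have hlin : HasDerivAt (fun y => a * (A - c * y ^ σ) - b * σ * c * y ^ σ)
      (-(σ * c * (a + b * σ) * x ^ (σ - 1))) x :=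
    (((hpow.const_mul c).const_sub A).const_mul a).sub (hpow.const_mul (b * σ * c))
      |>.congr_deriv (by ring)
  rw [hderiv.deriv_eq]
  refine ((hasDerivAt_rpow_mul_rpow_sub (a := a - 1) (b := b - 1) hx hu).mul hlin).deriv.trans ?_
  have hmul : x ^ (a - 1) * x ^ (σ - 1) = x ^ (a - 2) * x ^ σ := by
    rw [← rpow_add hx, ← rpow_add hx]; congr 1; ring
  set u := A - c * x ^ σ
  have hub : u ^ (b - 1) = u ^ (b - 2) * u := by rw [← rpow_add_one hu.ne']; congr 1; ring
  rw [show a - 1 - 1 = a - 2 by ring, show b - 1 - 1 = b - 2 by ring, hub]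
  linear_combination -(σ * c * (a + b * σ) * u ^ (b - 2) * u) * hmul

theorem selfSimilar_polynomial_identity {k σ A B : ℝ} (hA : A * ((2 * k + 2) * (2 * k + 1)) = k)
    (hσ : k * σ ^ 2 = 2 * (2 * k + 1))
    (hB : B * (2 * (2 * k + 2) * (2 * k + 1) + (k + 1) * σ * (2 * (2 * k + 2) + σ - 1)) = 1)
    (z : ℝ) :
    k * A = ((2 * k + 1) * (A - B * z) - k * σ * (B * z)) *
          ((2 * k + 2) * (A - B * z) - (k + 1) * σ * (B * z)) -
        σ * (B * z) * (2 * k + 2 + (k + 1) * σ) * (A - B * z) + z * (A - B * z) := by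
  linear_combination -A * hA - B ^ 2 * z ^ 2 * (k + 1) * hσ + z * (A - B * z) * hB

theorem selfSimilar_constants {m σ A B k : ℝ} (hm : 1 < m) (hσ : σ = √(2 * (m + 1)))
    (hA : A = (m - 1) / (2 * m * (m + 1)))
    (hB : B = (m - 1) ^ 2 / (m * (σ + 2) * (m * σ + m + 1))) (hk : k = 1 / (m - 1)) :
    A * ((2 * k + 2) * (2 * k + 1)) = k ∧ k * σ ^ 2 = 2 * (2 * k + 1) ∧
      B * (2 * (2 * k + 2) * (2 * k + 1) + (k + 1) * σ * (2 * (2 * k + 2) + σ - 1)) = 1 := by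
  subst hk
  have hm1 : m - 1 ≠ 0 := by linarith
  have hσ2 : σ ^ 2 = 2 * (m + 1) := hσ ▸ sq_sqrt (by linarith)
  have hm0 : 0 < m := by linarith
  have hσ0 : 0 < σ := hσ ▸ sqrt_pos.mpr (by linarith)
  refine ⟨?_, ?_, ?_⟩
  · rw [hA]; field_simp; ring
  · rw [hσ2]; field_simp; ring
  · rw [hB]; field_simp; linear_combination -m * hσ2

theorem selfSimilar_eq_rpow_mul {m σ α β k A B t x : ℝ} (hm : m ≠ 1) (hσ : σ ≠ 0)
    (hα : α = (σ + 2) / (σ * (m - 1))) (hβ : β = 1 / σ) (hk : k = 1 / (m - 1))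
    (ht : 0 < t) (hx : 0 ≤ x) :
    t ^ (-α) * (x * t ^ β) ^ (2 / (m - 1)) * (A - B * (x * t ^ β) ^ σ) ^ (1 / (m - 1)) =
      x ^ (2 * k) * (t ^ (-k) * (A - B * x ^ σ * t) ^ k) := by
  have hm1 : m - 1 ≠ 0 := sub_ne_zero.mpr hm
  have hβσ : β * σ = 1 := by rw [hβ]; field_simp
  have hexp : -α + β * (2 * k) = -k := by rw [hα, hβ, hk]; field_simp; ring
  rw [mul_rpow hx (rpow_nonneg ht.le _), mul_rpow hx (rpow_nonneg ht.le _), ← rpow_mul ht.le,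
    ← rpow_mul ht.le, hβσ, rpow_one, ← hk, show 2 / (m - 1) = 2 * k by rw [hk]; ring,
    ← hexp, rpow_add ht]
  rw [← mul_assoc B]
  ring

theorem rpow_rpow_mul_rpow_mul_rpow {m k t u x : ℝ} (hk : k * (m - 1) = 1) (ht : 0 ≤ t)
    (hu : 0 ≤ u) (hx : 0 ≤ x) :
    (x ^ (2 * k) * (t ^ (-k) * u ^ k)) ^ m = t ^ (-(k + 1)) * (x ^ (2 * k + 2) * u ^ (k + 1)) := by
  rw [mul_rpow (rpow_nonneg hx _) (mul_nonneg (rpow_nonneg ht _) (rpow_nonneg hu _)),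
    mul_rpow (rpow_nonneg ht _) (rpow_nonneg hu _), ← rpow_mul hx, ← rpow_mul ht, ← rpow_mul hu]
  rw [show 2 * k * m = 2 * k + 2 by linear_combination 2 * hk,
    show -k * m = -(k + 1) by linear_combination -hk, show k * m = k + 1 by linear_combination hk]
  ring

theorem deriv_deriv_selfSimilar_rpow {m k t A B σ s : ℝ} (hk : k * (m - 1) = 1) (ht : 0 < t)
    (hs : 0 < s) (hu : 0 < A - B * s ^ σ * t) :
    deriv (deriv fun y => (y ^ (2 * k) * (t ^ (-k) * (A - B * y ^ σ * t) ^ k)) ^ m) s =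
      t ^ (-(k + 1)) * (s ^ (2 * k) * (A - B * s ^ σ * t) ^ (k - 1) *
        (((2 * k + 1) * (A - B * s ^ σ * t) - k * σ * (B * t) * s ^ σ) *
            ((2 * k + 2) * (A - B * s ^ σ * t) - (k + 1) * σ * (B * t) * s ^ σ) -
          σ * (B * t) * (2 * k + 2 + (k + 1) * σ) * s ^ σ * (A - B * s ^ σ * t))) := by
  have hu' : 0 < A - B * t * s ^ σ := by rwa [mul_right_comm]
  have hpow : (fun y => (y ^ (2 * k) * (t ^ (-k) * (A - B * y ^ σ * t) ^ k)) ^ m) =ᶠ[𝓝 s]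
      fun y => t ^ (-(k + 1)) * (y ^ (2 * k + 2) * (A - B * t * y ^ σ) ^ (k + 1)) := by
    filter_upwards [eventually_pos_and_pos_sub_mul_rpow hs hu'] with y ⟨hy, hyu⟩
    rw [mul_right_comm B t] at hyu ⊢
    exact rpow_rpow_mul_rpow_mul_rpow hk ht.le hyu.le hy.le
  rw [hpow.deriv.deriv_eq, deriv_const_mul_field', deriv_const_mul_field']
  beta_reduce
  rw [deriv_deriv_rpow_mul_rpow_sub hs hu', mul_right_comm B t, show 2 * k + 2 - 2 = 2 * k by ring,
    show k + 1 - 2 = k - 1 by ring]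
  ring

theorem statement13_general (m : ℝ) (hm : 1 < m)
    (σ A B α β T : ℝ) (hσ : σ = Real.sqrt (2 * (m + 1)))
    (hA : A = (m - 1) / (2 * m * (m + 1)))
    (hB : B = (m - 1) ^ 2 / (m * (σ + 2) * (m * σ + m + 1)))
    (hα : α = (σ + 2) / (σ * (m - 1))) (hβ : β = 1 / σ)
    (w : ℝ → ℝ → ℝ)
    (hw : ∀ s τ : ℝ, w s τ =
      (T - τ) ^ (-α) * (s * (T - τ) ^ β) ^ (2 / (m - 1)) *
        (A - B * (s * (T - τ) ^ β) ^ σ) ^ (1 / (m - 1))) :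
    ∀ s : ℝ, 0 < s → ∀ τ : ℝ, τ < T → 0 < A - B * s ^ σ * (T - τ) →
      deriv (fun τ' => w s τ') τ =
        deriv (deriv (fun s' => w s' τ ^ m)) s + s ^ σ * w s τ := by
  intro s hs τ hτ hu
  obtain ⟨k, hk⟩ : ∃ k, k = 1 / (m - 1) := ⟨_, rfl⟩
  have hk1 : k * (m - 1) = 1 := by rw [hk]; field_simp [show m - 1 ≠ 0 by linarith]
  have hσ0 : σ ≠ 0 := hσ ▸ (sqrt_pos.mpr (by linarith)).ne'
  obtain ⟨hAk, hσk, hBk⟩ := selfSimilar_constants hm hσ hA hB hk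
  have ht : 0 < T - τ := sub_pos.mpr hτ
  have hwx : ∀ x τ', 0 ≤ x → τ' < T →
      w x τ' = x ^ (2 * k) * ((T - τ') ^ (-k) * (A - B * x ^ σ * (T - τ')) ^ k) := fun x τ' hx hτ' =>
    (hw x τ').trans (selfSimilar_eq_rpow_mul hm.ne' hσ0 hα hβ hk (sub_pos.mpr hτ') hx)
  have htime : (fun τ' => w s τ') =ᶠ[𝓝 τ] fun τ' =>
      s ^ (2 * k) * ((T - τ') ^ (-k) * (A - B * s ^ σ * (T - τ')) ^ k) := by
    filter_upwards [eventually_lt_nhds hτ] with τ' hτ' using hwx s τ' hs.le hτ'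
  have hspace : (fun s' => w s' τ ^ m) =ᶠ[𝓝 s] fun y =>
      (y ^ (2 * k) * ((T - τ) ^ (-k) * (A - B * y ^ σ * (T - τ)) ^ k)) ^ m := by
    filter_upwards [eventually_gt_nhds hs] with y hy using by rw [hwx y τ hy.le hτ]
  have hpow_t : (T - τ) ^ (-k) = (T - τ) ^ (-(k + 1)) * (T - τ) := by
    rw [← rpow_add_one ht.ne']; congr 1; ring
  have hpow_u : (A - B * s ^ σ * (T - τ)) ^ k =
      (A - B * s ^ σ * (T - τ)) ^ (k - 1) * (A - B * s ^ σ * (T - τ)) := by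
    rw [← rpow_add_one hu.ne', sub_add_cancel]
  rw [htime.deriv_eq, ((hasDerivAt_rpow_neg_mul_rpow_sub_mul hτ hu).const_mul _).deriv,
    hspace.deriv.deriv_eq, deriv_deriv_selfSimilar_rpow hk1 ht hs hu, hwx s τ hs.le hτ, hpow_t,
    hpow_u]
  linear_combination (T - τ) ^ (-(k + 1)) * s ^ (2 * k) * (A - B * s ^ σ * (T - τ)) ^ (k - 1) *
    selfSimilar_polynomial_identity hAk hσk hBk ((T - τ) * s ^ σ)

/-- The explicit backward self-similar solution
`w(s,τ) = (T-τ)^{-α} ξ^{2/(m-1)} (A - B ξ^{σ})^{1/(m-1)}`, `ξ = s(T-τ)^{β}`,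
with `σ = √(2(m+1))`, solves the one-dimensional weighted equation
`∂_τ w = ∂_ss(w^m) + s^{σ} w` (the case `p = 1`, `N̄ = 1`) wherever
`s > 0`, `τ < T` and `A - B s^{σ}(T-τ) > 0`. -/
theorem statement13 (m : ℝ) (hm : 1 < m)
    (σ A B α β T : ℝ) (hσ : σ = Real.sqrt (2 * (m + 1)))
    (hA : A = (m - 1) / (2 * m * (m + 1)))
    (hB : B = (m - 1) ^ 2 / (m * (σ + 2) * (m * σ + m + 1)))
    (hα : α = (σ + 2) / (σ * (m - 1))) (hβ : β = 1 / σ) (hT : 0 < T)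
    (w : ℝ → ℝ → ℝ)
    (hw : ∀ s τ : ℝ, w s τ =
      (T - τ) ^ (-α) * (s * (T - τ) ^ β) ^ (2 / (m - 1)) *
        (A - B * (s * (T - τ) ^ β) ^ σ) ^ (1 / (m - 1))) :
    ∀ s : ℝ, 0 < s → ∀ τ : ℝ, τ < T → 0 < A - B * s ^ σ * (T - τ) →
      deriv (fun τ' => w s τ') τ =
        deriv (deriv (fun s' => w s' τ ^ m)) s + s ^ σ * w s τ :=
  statement13_general m hm σ A B α β T hσ hA hB hα hβ w hw
end
end

section
/- Let m > 1 and σ₁ > -2, and set N := 2 + m(σ₁+2)/(m+1) and σ₂ := σ₁ + m√(2(m+1))(σ₁+2)/(m+1). Then there exist positive constants A and B such that for every T > 0 the function u(r,t) := (T-t)^{-1/(m-1)} r^{(σ₁+2)/(m-1)} (A - B(T-t) r^{σ₂-σ₁})^{1/(m-1)}, defined on the set of (r,t) with r > 0, 0 < t < T and A - B(T-t) r^{σ₂-σ₁} > 0, satisfies r^{σ₁} ∂_t u(r,t) = ∂_rr(u^m)(r,t) + ((N-1)/r) ∂_r(u^m)(r,t) + r^{σ₂} u(r,t) at every such point; that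 is, u is an explicit blow-up solution of (E)[N,m,1,σ₁,σ₂] (the case p = 1). -/
/-!
With `α = 1/(m-1)`, `β = (σ₁+2)/(m-1)`, `q = σ₂ - σ₁` and `G = A - B(T-t)r^q` the ansatz reads
`u = (T-t)^(-α) r^β G^α`, and `u^m = (T-t)^(-α-1) r^(βm) G^(α+1)` has the same shape. Since
`βm - 2 = β + σ₁`, every term of the equation is `(T-t)^(-α-1) r^(β+σ₁) G^(α-1)` times a quadratic
polynomial in `Z = (T-t) r^q`. The constant coefficient fixes `A`, the quadratic one fixes `B`, and the
linear one then holds exactly under the balance `βm(βm+N-2) = α(α+1)q²`, which is what the choices of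
`N` and `σ₂` guarantee.
-/

open Real Filter Topology

theorem hasDerivAt_rpow_mul_sub_rpow {a b q A D x : ℝ} (hx : x ≠ 0) (hG : A - D * x ^ q ≠ 0) :
    HasDerivAt (fun ρ => ρ ^ a * (A - D * ρ ^ q) ^ b)
      (x ^ (a - 1) * (A - D * x ^ q) ^ (b - 1) * (a * (A - D * x ^ q) - b * q * D * x ^ q)) x := by
  have hG' : HasDerivAt (fun ρ => A - D * ρ ^ q) (-(D * (q * x ^ (q - 1)))) x :=
    ((hasDerivAt_rpow_const (Or.inl hx)).const_mul D).const_sub A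
  refine ((hasDerivAt_rpow_const (p := a) (Or.inl hx)).mul
    (hG'.rpow_const (p := b) (Or.inl hG))).congr_deriv ?_
  rw [rpow_sub_one hx, rpow_sub_one hx, rpow_sub_one hG]
  field_simp
  ring

theorem hasDerivAt_rpow_mul_sub_rpow_mul_sub {c e k l q A D x : ℝ} (hx : x ≠ 0)
    (hG : A - D * x ^ q ≠ 0) :
    HasDerivAt (fun ρ => ρ ^ c * (A - D * ρ ^ q) ^ e * (k * (A - D * ρ ^ q) - l * D * ρ ^ q))
      (x ^ (c - 1) * (A - D * x ^ q) ^ (e - 1) *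
        ((c * (A - D * x ^ q) - e * q * D * x ^ q) * (k * (A - D * x ^ q) - l * D * x ^ q)
          - (k + l) * q * D * x ^ q * (A - D * x ^ q))) x := by
  have hlin : HasDerivAt (fun ρ => k * (A - D * ρ ^ q) - l * D * ρ ^ q)
      (-((k + l) * D * (q * x ^ (q - 1)))) x := by
    refine ((((hasDerivAt_rpow_const (Or.inl hx)).const_mul D).const_sub A).const_mul k |>.sub
      ((hasDerivAt_rpow_const (p := q) (Or.inl hx)).const_mul (l * D))).congr_deriv ?_
    ring
  refine ((hasDerivAt_rpow_mul_sub_rpow hx hG).mul hlin).congr_deriv ?_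
  rw [rpow_sub_one hx, rpow_sub_one hx, rpow_sub_one hG]
  field_simp
  ring

theorem deriv_rpow_mul_sub_rpow_eventuallyEq {a b q A D x : ℝ} (hx : x ≠ 0)
    (hG : A - D * x ^ q ≠ 0) :
    deriv (fun ρ => ρ ^ a * (A - D * ρ ^ q) ^ b) =ᶠ[𝓝 x]
      fun ρ => ρ ^ (a - 1) * (A - D * ρ ^ q) ^ (b - 1) *
        (a * (A - D * ρ ^ q) - b * q * D * ρ ^ q) := by
  have hcont : ContinuousAt (fun ρ => A - D * ρ ^ q) x :=
    continuousAt_const.sub (continuousAt_const.mul (continuousAt_rpow_const x q (Or.inl hx)))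
  filter_upwards [isOpen_ne.mem_nhds hx, hcont.eventually_ne hG] with ρ hρ hGρ
  exact (hasDerivAt_rpow_mul_sub_rpow hρ hGρ).deriv

theorem hasDerivAt_profile_time {α A B P Q T t : ℝ} (ht : t < T)
    (hG : A - B * (T - t) * Q ≠ 0) :
    HasDerivAt (fun τ => (T - τ) ^ (-α) * P * (A - B * (T - τ) * Q) ^ α)
      (α * A * (T - t) ^ (-α - 1) * P * (A - B * (T - t) * Q) ^ (α - 1)) t := by
  have hs : T - t ≠ 0 := (sub_pos.2 ht).ne'
  have hG' : A - B * Q * (T - t) ^ (1 : ℝ) ≠ 0 := by rwa [rpow_one, mul_right_comm]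
  have h : HasDerivAt (fun τ => P * ((T - τ) ^ (-α) * (A - B * Q * (T - τ) ^ (1 : ℝ)) ^ α))
      (P * ((T - t) ^ (-α - 1) * (A - B * Q * (T - t) ^ (1 : ℝ)) ^ (α - 1) *
        (-α * (A - B * Q * (T - t) ^ (1 : ℝ)) - α * 1 * (B * Q) * (T - t) ^ (1 : ℝ)) * -1)) t :=
    ((hasDerivAt_rpow_mul_sub_rpow hs hG').comp t ((hasDerivAt_id t).const_sub T)).const_mul P
  simp only [rpow_one, mul_right_comm B Q] at h
  refine (h.congr_deriv (by ring)).congr_of_eventuallyEq (.of_forall fun τ => ?_)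
  ring

theorem profile_rpow_eventuallyEq {s α β m q A D r : ℝ} (hs : 0 ≤ s) (hr : 0 < r)
    (hG : 0 < A - D * r ^ q) :
    (fun ρ => (s ^ (-α) * ρ ^ β * (A - D * ρ ^ q) ^ α) ^ m) =ᶠ[𝓝 r]
      fun ρ => s ^ (-α * m) * (ρ ^ (β * m) * (A - D * ρ ^ q) ^ (α * m)) := by
  have hcont : ContinuousAt (fun ρ => A - D * ρ ^ q) r :=
    continuousAt_const.sub (continuousAt_const.mul (continuousAt_rpow_const r q (Or.inl hr.ne')))
  filter_upwards [eventually_gt_nhds hr, hcont.eventually (eventually_gt_nhds hG)] with ρ hρ hGρ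
  rw [mul_rpow (by positivity) (rpow_nonneg hGρ.le _), mul_rpow (by positivity) (by positivity),
    ← rpow_mul hs, ← rpow_mul hρ.le, ← rpow_mul hGρ.le, mul_assoc]

theorem profile_identity {α a b q N A B Z : ℝ} (hb : b = α + 1)
    (hA : A * (a * (a + N - 2)) = α) (hB : B * ((a + b * q) * (a + N - 2 + b * q)) = 1)
    (hq : a * (a + N - 2) = α * b * q ^ 2) :
    α * A = ((a - 1) * (A - B * Z) - (b - 1) * q * (B * Z)) * (a * (A - B * Z) - b * q * (B * Z))
      - (a + b * q) * q * (B * Z) * (A - B * Z)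
      + (N - 1) * (A - B * Z) * (a * (A - B * Z) - b * q * (B * Z)) + Z * (A - B * Z) := by
  subst hb
  linear_combination (-A) * hA + (A * Z - B * Z ^ 2) * hB + (A * B * Z) * hq

theorem blowup_exponent_balance {m σ₁ N σ₂ : ℝ} (hm : 1 < m)
    (hN : N = 2 + m * (σ₁ + 2) / (m + 1))
    (hσ₂ : σ₂ = σ₁ + m * Real.sqrt (2 * (m + 1)) * (σ₁ + 2) / (m + 1)) :
    (σ₁ + 2) / (m - 1) * m * ((σ₁ + 2) / (m - 1) * m + N - 2)
      = 1 / (m - 1) * (1 / (m - 1) * m) * (σ₂ - σ₁) ^ 2 := by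
  have hm1 : m - 1 ≠ 0 := by linarith
  have hm1' : m + 1 ≠ 0 := by linarith
  have hsq : Real.sqrt (2 * (m + 1)) ^ 2 = 2 * (m + 1) := sq_sqrt (by linarith)
  rw [hN, hσ₂, add_sub_cancel_left, div_pow, mul_pow, mul_pow, hsq]
  field_simp
  ring

theorem radial_equation_of_profile {m σ₁ σ₂ N α β q A B T r t : ℝ} {u : ℝ → ℝ → ℝ}
    (hαm : α * m = α + 1) (hβm : β * m = β + σ₁ + 2) (hσ₂ : σ₂ = σ₁ + q)
    (hA : A * (β * m * (β * m + N - 2)) = α)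
    (hB : B * ((β * m + α * m * q) * (β * m + N - 2 + α * m * q)) = 1)
    (hbal : β * m * (β * m + N - 2) = α * (α * m) * q ^ 2)
    (hu : ∀ r t, u r t = (T - t) ^ (-α) * r ^ β * (A - B * (T - t) * r ^ q) ^ α)
    (hr : 0 < r) (htT : t < T) (hG : 0 < A - B * (T - t) * r ^ q) :
    r ^ σ₁ * deriv (fun τ => u r τ) t =
      deriv (deriv (fun ρ => u ρ t ^ m)) r
        + ((N - 1) / r) * deriv (fun ρ => u ρ t ^ m) r
        + r ^ σ₂ * u r t := by
  have hs : 0 < T - t := sub_pos.2 htT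
  have hDt : deriv (fun τ => u r τ) t
      = α * A * (T - t) ^ (-α - 1) * r ^ β * (A - B * (T - t) * r ^ q) ^ (α - 1) := by
    simp only [hu]
    exact (hasDerivAt_profile_time htT hG.ne').deriv
  have hum : (fun ρ => u ρ t ^ m) =ᶠ[𝓝 r]
      fun ρ => (T - t) ^ (-α * m) * (ρ ^ (β * m) * (A - B * (T - t) * ρ ^ q) ^ (α * m)) := by
    simp only [hu]
    exact profile_rpow_eventuallyEq hs.le hr hG
  have hDr : deriv (fun ρ => u ρ t ^ m) =ᶠ[𝓝 r] fun ρ => (T - t) ^ (-α * m) *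
      (ρ ^ (β * m - 1) * (A - B * (T - t) * ρ ^ q) ^ (α * m - 1) *
        (β * m * (A - B * (T - t) * ρ ^ q) - α * m * q * (B * (T - t)) * ρ ^ q)) := by
    refine hum.deriv.trans ?_
    rw [deriv_const_mul_field']
    filter_upwards [deriv_rpow_mul_sub_rpow_eventuallyEq hr.ne' hG.ne'] with ρ hρ
    rw [hρ]
  rw [hDt, hDr.deriv_eq, hDr.eq_of_nhds, deriv_const_mul_field']
  beta_reduce
  rw [(hasDerivAt_rpow_mul_sub_rpow_mul_sub hr.ne' hG.ne').deriv, hu r t]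
  have eT : (T - t) ^ (-α * m) = (T - t) ^ (-α - 1) := by rw [neg_mul, hαm, neg_add']
  have eT' : (T - t) ^ (-α) = (T - t) ^ (-α - 1) * (T - t) := by
    rw [← rpow_add_one hs.ne', sub_add_cancel]
  have er2 : r ^ (β * m - 1 - 1) = r ^ σ₁ * r ^ β := by
    rw [← rpow_add hr]; congr 1; linarith
  have er1 : r ^ (β * m - 1) = r ^ σ₁ * r ^ β * r := by
    rw [← rpow_add hr, ← rpow_add_one hr.ne']; congr 1; linarith
  have er : r ^ σ₂ = r ^ σ₁ * r ^ q := by rw [hσ₂, rpow_add hr]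
  have eG2 : (A - B * (T - t) * r ^ q) ^ (α * m - 1 - 1) = (A - B * (T - t) * r ^ q) ^ (α - 1) := by
    rw [hαm]; ring_nf
  have eG1 : (A - B * (T - t) * r ^ q) ^ (α * m - 1)
      = (A - B * (T - t) * r ^ q) ^ (α - 1) * (A - B * (T - t) * r ^ q) := by
    rw [← rpow_add_one hG.ne']; congr 1; linarith
  have eG : (A - B * (T - t) * r ^ q) ^ α
      = (A - B * (T - t) * r ^ q) ^ (α - 1) * (A - B * (T - t) * r ^ q) := by
    rw [← rpow_add_one hG.ne', sub_add_cancel]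
  rw [eT, eT', er2, er1, er, eG2, eG1, eG]
  have key := profile_identity (Z := (T - t) * r ^ q) hαm hA hB hbal
  rw [← mul_assoc B] at key
  set G := A - B * (T - t) * r ^ q
  linear_combination ((T - t) ^ (-α - 1) * r ^ σ₁ * r ^ β * G ^ (α - 1)) * key
    - (N - 1) * (T - t) ^ (-α - 1) * r ^ σ₁ * r ^ β * G ^ (α - 1) * G
      * (β * m * G - α * m * q * (B * (T - t)) * r ^ q) * mul_inv_cancel₀ hr.ne'

/-- For `m > 1`, `σ₁ > -2`, `N = 2 + m(σ₁+2)/(m+1)` and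
`σ₂ = σ₁ + m√(2(m+1))(σ₁+2)/(m+1)`, there exist positive constants `A`, `B` such that
for every `T > 0` the explicit function
`u(r,t) = (T-t)^{-1/(m-1)} r^{(σ₁+2)/(m-1)} (A - B(T-t) r^{σ₂-σ₁})^{1/(m-1)}`
satisfies `r^{σ₁} ∂_t u = ∂_rr(u^m) + ((N-1)/r) ∂_r(u^m) + r^{σ₂} u`
wherever `r > 0`, `0 < t < T` and `A - B(T-t) r^{σ₂-σ₁} > 0`. -/
theorem statement14 (m σ₁ N σ₂ : ℝ) (hm : 1 < m) (hσ₁ : -2 < σ₁)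
    (hN : N = 2 + m * (σ₁ + 2) / (m + 1))
    (hσ₂ : σ₂ = σ₁ + m * Real.sqrt (2 * (m + 1)) * (σ₁ + 2) / (m + 1)) :
    ∃ A B : ℝ, 0 < A ∧ 0 < B ∧ ∀ T : ℝ, 0 < T →
      ∀ u : ℝ → ℝ → ℝ,
        (∀ r t : ℝ, u r t =
          (T - t) ^ (-(1 / (m - 1))) * r ^ ((σ₁ + 2) / (m - 1)) *
            (A - B * (T - t) * r ^ (σ₂ - σ₁)) ^ (1 / (m - 1))) →
        ∀ r : ℝ, 0 < r → ∀ t : ℝ, 0 < t → t < T →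
          0 < A - B * (T - t) * r ^ (σ₂ - σ₁) →
          r ^ σ₁ * deriv (fun τ => u r τ) t =
            deriv (deriv (fun ρ => u ρ t ^ m)) r
              + ((N - 1) / r) * deriv (fun ρ => u ρ t ^ m) r
              + r ^ σ₂ * u r t := by
  have hm1 : 0 < m - 1 := by linarith
  have hσ : 0 < σ₁ + 2 := by linarith
  set α := 1 / (m - 1) with hα
  set β := (σ₁ + 2) / (m - 1) with hβ
  set q := σ₂ - σ₁ with hq
  have hαm : α * m = α + 1 := by rw [hα]; field_simp; ring
  have hβm : β * m = β + σ₁ + 2 := by rw [hβ]; field_simp; ring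
  have hK : 0 < β * m + N - 2 := by
    rw [show β * m + N - 2 = β * m + m * (σ₁ + 2) / (m + 1) by rw [hN]; ring]
    positivity
  have hq0 : 0 < q := by
    rw [hq, hσ₂, add_sub_cancel_left]
    have : 0 < Real.sqrt (2 * (m + 1)) := Real.sqrt_pos.2 (by linarith)
    positivity
  have ha : 0 < β * m * (β * m + N - 2) := mul_pos (by positivity) hK
  have hb : 0 < (β * m + α * m * q) * (β * m + N - 2 + α * m * q) := by
    have : 0 < α * m * q := by positivity
    exact mul_pos (by positivity) (by linarith)
  refine ⟨α / (β * m * (β * m + N - 2)), ((β * m + α * m * q) * (β * m + N - 2 + α * m * q))⁻¹,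
    by positivity, by positivity, ?_⟩
  intro T _ u hu r hr t _ htT hG
  exact radial_equation_of_profile hαm hβm (by ring) (div_mul_cancel₀ _ ha.ne')
    (inv_mul_cancel₀ hb.ne') (blowup_exponent_balance hm hN hσ₂) hu hr htT hG
end

section
/- Let N, p, σ₂ be real numbers with p > 1, let c > 0, and set K := N - 2 - 2(σ₂+2)/(p-1) and λ := ((σ₂+2)/(p-1))·(N - 2 - (σ₂+2)/(p-1)). Let f : ℝ → (0,∞) be twice differentiable satisfying the traveling-wave equation f''(y) - c f'(y) - λ f(y) + f(y)^p = 0 for all y ∈ ℝ. Then the function u(r,t) := r^{-(σ₂+2)/(p-1)} f(ln r + (K+c)t) is a classical radial solution of (E)[N,1,p,-2,σ₂] on (0,∞) × ℝ, i.e. it satisfies r^{-2} ∂_t u = ∂_rr u + ((N-1)/r) ∂_r u + r^{σ₂} u^p for all r > 0 and t ∈ ℝ. -/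
open Real Set

noncomputable section

/-!
In the variable `y = log r` the self-similar ansatz `u = r^α g(log r)` turns the radial Laplacian
into the constant-coefficient operator `r^(α-2) (g'' + (N-2+2α) g' + α(N-2+α) g)`. With
`α = -(σ₂+2)/(p-1)` the source term `r^σ₂ u^p` carries the same factor `r^(α-2)`, and the time
derivative of `f(log r + (K+c) t)` contributes `(K+c) f'`; after cancelling `r^(α-2)` the equation
is exactly the travelling-wave ODE for `f`.
-/

open Filter Topology

section SelfSimilar

variable {α : ℝ} {g : ℝ → ℝ} {ρ : ℝ}

theorem hasDerivAt_rpow_mul_comp_log (hρ : 0 < ρ) (hg : DifferentiableAt ℝ g (log ρ)) :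
    HasDerivAt (fun x => x ^ α * g (log x))
      (ρ ^ (α - 1) * (α * g (log ρ) + deriv g (log ρ))) ρ := by
  have hpow : HasDerivAt (fun x : ℝ => x ^ α) (α * ρ ^ (α - 1)) ρ :=
    hasDerivAt_rpow_const (Or.inl hρ.ne')
  have hcomp : HasDerivAt (fun x => g (log x)) (deriv g (log ρ) * ρ⁻¹) ρ :=
    hg.hasDerivAt.comp ρ (hasDerivAt_log hρ.ne')
  refine (hpow.mul hcomp).congr_deriv ?_
  rw [rpow_sub hρ, rpow_one]
  field_simp

theorem deriv_rpow_mul_comp_log_eventuallyEq (hg : Differentiable ℝ g) (hρ : 0 < ρ) :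
    deriv (fun x => x ^ α * g (log x))
      =ᶠ[𝓝 ρ] fun x => x ^ (α - 1) * (α * g (log x) + deriv g (log x)) := by
  filter_upwards [eventually_gt_nhds hρ] with x hx
  exact (hasDerivAt_rpow_mul_comp_log hx (hg _)).deriv

/-- The derivative of `r^α g(log r)` is again of this form, with exponent `α - 1` and profile
`α g + g'`; differentiating twice therefore reuses `hasDerivAt_rpow_mul_comp_log`. -/
theorem hasDerivAt_deriv_rpow_mul_comp_log (hg : Differentiable ℝ g)
    (hg' : Differentiable ℝ (deriv g)) (hρ : 0 < ρ) :
    HasDerivAt (deriv fun x => x ^ α * g (log x))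
      (ρ ^ (α - 2) * (α * (α - 1) * g (log ρ) + (2 * α - 1) * deriv g (log ρ)
        + deriv (deriv g) (log ρ))) ρ := by
  have hderiv : deriv (fun s => α * g s + deriv g s) (log ρ)
      = α * deriv g (log ρ) + deriv (deriv g) (log ρ) :=
    (((hg _).hasDerivAt.const_mul α).add (hg' _).hasDerivAt).deriv
  have h := hasDerivAt_rpow_mul_comp_log (α := α - 1) (g := fun s => α * g s + deriv g s) hρ
    (((hg _).const_mul α).add (hg' _))
  rw [hderiv, sub_sub, one_add_one_eq_two] at h
  refine (h.congr_of_eventuallyEq (deriv_rpow_mul_comp_log_eventuallyEq hg hρ)).congr_deriv ?_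
  ring

theorem radial_laplacian_rpow_mul_comp_log (N : ℝ) (hg : Differentiable ℝ g)
    (hg' : Differentiable ℝ (deriv g)) (hρ : 0 < ρ) :
    deriv (deriv fun x => x ^ α * g (log x)) ρ
        + (N - 1) / ρ * deriv (fun x => x ^ α * g (log x)) ρ
      = ρ ^ (α - 2) * (deriv (deriv g) (log ρ) + (N - 2 + 2 * α) * deriv g (log ρ)
        + α * (N - 2 + α) * g (log ρ)) := by
  rw [(hasDerivAt_deriv_rpow_mul_comp_log hg hg' hρ).deriv,
    (hasDerivAt_rpow_mul_comp_log hρ (hg _)).deriv, rpow_sub hρ, rpow_sub hρ, rpow_one,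
    rpow_two]
  field_simp
  ring

end SelfSimilar

theorem rpow_mul_mul_rpow_rpow {r x : ℝ} (hr : 0 < r) (hx : 0 ≤ x) (σ α p : ℝ) :
    r ^ σ * (r ^ α * x) ^ p = r ^ (σ + α * p) * x ^ p := by
  rw [mul_rpow (rpow_nonneg hr.le α) hx, ← rpow_mul hr.le, ← mul_assoc, ← rpow_add hr]

theorem hasDerivAt_const_mul_comp_add_mul {f : ℝ → ℝ} {a b t : ℝ}
    (hf : DifferentiableAt ℝ f (a + b * t)) (C : ℝ) :
    HasDerivAt (fun τ => C * f (a + b * τ)) (C * (deriv f (a + b * t) * b)) t := by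
  have hlin : HasDerivAt (fun τ => a + b * τ) b t := by
    simpa using ((hasDerivAt_id t).const_mul b).const_add a
  exact (hf.hasDerivAt.comp t hlin).const_mul C

theorem statement16_general (N p σ₂ c : ℝ) (hp : 1 < p)
    (K lam : ℝ) (hK : K = N - 2 - 2 * (σ₂ + 2) / (p - 1))
    (hlam : lam = ((σ₂ + 2) / (p - 1)) * (N - 2 - (σ₂ + 2) / (p - 1)))
    (f : ℝ → ℝ) (hfpos : ∀ y : ℝ, 0 < f y)
    (hfd : Differentiable ℝ f) (hfd2 : Differentiable ℝ (deriv f))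
    (hfeq : ∀ y : ℝ, deriv (deriv f) y - c * deriv f y - lam * f y + f y ^ p = 0) :
    IsClassicalRadialSolution N 1 p (-2) σ₂ Set.univ
      (fun r t => r ^ (-(σ₂ + 2) / (p - 1)) * f (Real.log r + (K + c) * t)) := by
  set α := -(σ₂ + 2) / (p - 1) with hα
  have hK' : K = N - 2 + 2 * α := by rw [hK, hα]; ring
  have hlam' : lam = -α * (N - 2 + α) := by rw [hlam, hα]; ring
  have hσ : σ₂ + α * p = α - 2 := by rw [hα]; field_simp [(sub_pos.mpr hp).ne']; ring
  intro r hr t _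
  set y := log r + (K + c) * t
  set g : ℝ → ℝ := fun s => f (s + (K + c) * t)
  have hg : Differentiable ℝ g := hfd.comp (differentiable_id.add_const _)
  have hg_deriv : deriv g = fun s => deriv f (s + (K + c) * t) :=
    funext fun s => deriv_comp_add_const _ _ _
  have hg' : Differentiable ℝ (deriv g) := hg_deriv ▸ hfd2.comp (differentiable_id.add_const _)
  have htime := hasDerivAt_const_mul_comp_add_mul (hfd y) (r ^ α)
  simp only [rpow_one]
  refine ⟨mul_pos (rpow_pos_of_pos hr α) (hfpos y), htime.differentiableAt,
    (hasDerivAt_rpow_mul_comp_log (g := g) hr (hg _)).differentiableAt,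
    (hasDerivAt_deriv_rpow_mul_comp_log (α := α) hg hg' hr).differentiableAt, ?_⟩
  have htime_factor : r ^ (-2 : ℝ) * (r ^ α * (deriv f y * (K + c)))
      = r ^ (α - 2) * (deriv f y * (K + c)) := by
    rw [← mul_assoc, ← rpow_add hr, neg_add_eq_sub]
  rw [htime.deriv, htime_factor, radial_laplacian_rpow_mul_comp_log N hg hg' hr,
    rpow_mul_mul_rpow_rpow hr (hfpos y).le, hσ, ← mul_add, hg_deriv]
  congr 1
  simp only [deriv_comp_add_const, g]
  linear_combination (-1) * hfeq y + deriv f y * hK' - f y * hlam'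

theorem statement16 (N p σ₂ c : ℝ) (hp : 1 < p) (hc : 0 < c)
    (K lam : ℝ) (hK : K = N - 2 - 2 * (σ₂ + 2) / (p - 1))
    (hlam : lam = ((σ₂ + 2) / (p - 1)) * (N - 2 - (σ₂ + 2) / (p - 1)))
    (f : ℝ → ℝ) (hfpos : ∀ y : ℝ, 0 < f y)
    (hfd : Differentiable ℝ f) (hfd2 : Differentiable ℝ (deriv f))
    (hfeq : ∀ y : ℝ, deriv (deriv f) y - c * deriv f y - lam * f y + f y ^ p = 0) :
    IsClassicalRadialSolution N 1 p (-2) σ₂ Set.univ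
      (fun r t => r ^ (-(σ₂ + 2) / (p - 1)) * f (Real.log r + (K + c) * t)) :=
  statement16_general N p σ₂ c hp K lam hK hlam f hfpos hfd hfd2 hfeq
end
end
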